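/- arXiv:1509.06599 — 7 statements merged into one kernel-verified Lean document; each statement's English description precedes it below -/
import Mathlib

section
/- Let 0<γ<1, a≥0 real, and let 0=t₀<t₁<⋯<t_n with τ_j = t_{j+1}−t_j. Let v be twice continuously differentiable on [0,t_n], set w(s)=e^{a s}v(s), and for each j let T_j be the affine function on [t_j,t_{j+1}] with T_j(t_j)=w(t_j) and T_j(t_{j+1})=w(t_{j+1}). Define the product-integration remainder R^n = (ˢD_{*,t}^γ v)(t_n) − (e^{−a t_n}/Γ(1−γ)) Σ_{j=0}^{n−1} ∫_{t_j}^{t_{j+1}} (t_n−s)^{−γ} T_j'(s) ds. Then, with C = max_{0≤t≤t_n} | e^{a(t−t_n)} ( v''(t) + 2a v'(t) + a² v(t) ) |, one has |R^n| ≤ (Cγ/Γ(1−γ)) Σ_{j=0}^{n−2} τ_j² ∫_{t_j}^{t_{j+1}} (t_n−s)^{−γ−1} ds + (2C/Γ(3−γ)) τ_{n−1}^{2−γ}. In particular, on a uniform mesh with step τ one has |R^n| ≤ (1/Γ(1−γ) + 2/Γ(3−γ)) C τ^{2−γ}. -/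
/-!
With `w = e^{a·} v`, the remainder is `e^{-a t_n} / Γ(1-γ)` times
`∑ⱼ ∫_{t_j}^{t_{j+1}} (t_n - s)^{-γ} (w' - T_j') ds`, and `|w''| ≤ e^{a t_n} C`.
On an interior subinterval, integrate by parts: the interpolation error `w - T_j` vanishes at
both ends and is `O(τ_j² max |w''|)`, leaving `γ ∫ (t_n - s)^{-γ-1} |w - T_j|`.
On the last subinterval `(t_n - s)^{-γ-1}` is not integrable, so instead
`|w' - T_j'| ≤ τ_{n-1} max |w''|` is integrated against `(t_n - s)^{-γ}`, giving
`τ_{n-1}^{2-γ} / ((1-γ) Γ(1-γ)) = τ_{n-1}^{2-γ} / Γ(2-γ) ≤ 2 τ_{n-1}^{2-γ} / Γ(3-γ)`.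
On a uniform mesh the interior kernel integrals add up to
`∫_0^{t_{n-1}} (t_n - s)^{-γ-1} ds ≤ τ^{-γ} / γ`.
-/

open Real MeasureTheory intervalIntegral Finset

open Set

section Kernel

variable {r T p q s : ℝ}

lemma continuousOn_sub_rpow (r : ℝ) (hq : q < T) :
    ContinuousOn (fun s => (T - s) ^ r) (Icc p q) :=
  (continuousOn_const.sub continuousOn_id).rpow_const fun _ hs =>
    Or.inl (sub_ne_zero.2 (hs.2.trans_lt hq).ne')

lemma intervalIntegrable_sub_rpow (hr : -1 < r) (T p q : ℝ) :
    IntervalIntegrable (fun s => (T - s) ^ r) volume p q := by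
  simpa using (intervalIntegrable_rpow' (a := T - p) (b := T - q) hr).comp_sub_left T

lemma hasDerivAt_sub_rpow (r : ℝ) (hs : s < T) :
    HasDerivAt (fun s => (T - s) ^ r) (-r * (T - s) ^ (r - 1)) s := by
  have := (Real.hasDerivAt_rpow_const (p := r) (Or.inl (sub_pos.2 hs).ne')).comp s
    ((hasDerivAt_id s).const_sub T)
  exact this.congr_deriv (by simp)

lemma integral_sub_rpow (T : ℝ) (h : -1 < r ∨ r ≠ -1 ∧ (0 : ℝ) ∉ uIcc (T - q) (T - p)) :
    ∫ s in p..q, (T - s) ^ r = ((T - p) ^ (r + 1) - (T - q) ^ (r + 1)) / (r + 1) := by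
  rw [integral_comp_sub_left (fun x => x ^ r) T, integral_rpow h]

end Kernel

noncomputable def linInterp (w : ℝ → ℝ) (p q : ℝ) (s : ℝ) : ℝ :=
  w p + (w q - w p) / (q - p) * (s - p)

section LinearInterpolation

variable {w w' w'' : ℝ → ℝ} {p q M : ℝ}

lemma hasDerivAt_linInterp (w : ℝ → ℝ) (p q s : ℝ) :
    HasDerivAt (linInterp w p q) ((w q - w p) / (q - p)) s := by
  have : HasDerivAt (fun x => w p + (w q - w p) / (q - p) * (x - p))
      ((w q - w p) / (q - p) * 1) s :=
    (((hasDerivAt_id s).sub_const p).const_mul _).const_add (w p)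
  rwa [mul_one] at this

@[simp] lemma linInterp_left (w : ℝ → ℝ) (p q : ℝ) : linInterp w p q p = w p := by
  simp [linInterp]

lemma linInterp_right (w : ℝ → ℝ) {p q : ℝ} (hpq : p ≠ q) : linInterp w p q q = w q := by
  rw [linInterp, div_mul_cancel₀ _ (sub_ne_zero.2 hpq.symm)]
  ring

variable (hw' : ∀ s ∈ Icc p q, HasDerivAt w (w' s) s)
  (hw'' : ∀ s ∈ Icc p q, HasDerivAt w' (w'' s) s) (hM : ∀ s ∈ Icc p q, |w'' s| ≤ M)
include hw' hw'' hM

lemma abs_deriv_sub_slope_le (hpq : p < q) {s : ℝ} (hs : s ∈ Icc p q) :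
    |w' s - (w q - w p) / (q - p)| ≤ M * (q - p) := by
  obtain ⟨ξ, hξ, hξw⟩ := exists_hasDerivAt_eq_slope w w' hpq
    (fun x hx => (hw' x hx).continuousAt.continuousWithinAt)
    (fun x hx => hw' x (Ioo_subset_Icc_self hx))
  rw [← hξw]
  calc |w' s - w' ξ| ≤ M * |s - ξ| := by
        simpa only [Real.norm_eq_abs] using Convex.norm_image_sub_le_of_norm_hasDerivWithin_le
          (fun x hx => (hw'' x hx).hasDerivWithinAt) (fun x hx => (hM x hx)) (convex_Icc p q)
          (Ioo_subset_Icc_self hξ) hs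
    _ ≤ M * (q - p) := by
        gcongr
        · exact (abs_nonneg _).trans (hM p (left_mem_Icc.2 hpq.le))
        · exact abs_sub_le_iff.2 ⟨by linarith [hs.2, hξ.1], by linarith [hs.1, hξ.2]⟩

lemma abs_sub_linInterp_le (hpq : p < q) {s : ℝ} (hs : s ∈ Icc p q) :
    |w s - linInterp w p q s| ≤ M * (q - p) ^ 2 := by
  have := Convex.norm_image_sub_le_of_norm_hasDerivWithin_le
    (f := fun s => w s - linInterp w p q s)
    (fun x hx => ((hw' x hx).sub (hasDerivAt_linInterp w p q x)).hasDerivWithinAt)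
    (fun x hx => abs_deriv_sub_slope_le hw' hw'' hM hpq hx) (convex_Icc p q)
    (left_mem_Icc.2 hpq.le) hs
  simp only [linInterp_left, sub_self, sub_zero, Real.norm_eq_abs] at this
  calc _ ≤ M * (q - p) * |s - p| := this
    _ ≤ M * (q - p) * (q - p) := by
        gcongr
        · exact mul_nonneg ((abs_nonneg _).trans (hM p (left_mem_Icc.2 hpq.le))) (by linarith)
        · exact abs_sub_le_iff.2 ⟨by linarith [hs.2], by linarith [hs.1]⟩
    _ = M * (q - p) ^ 2 := by ring

end LinearInterpolation

lemma integral_mul_sub_const_mul_integral {K f : ℝ → ℝ} {p q : ℝ} (c : ℝ)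
    (hK : IntervalIntegrable K volume p q) (hf : ContinuousOn f (uIcc p q)) :
    (∫ s in p..q, K s * f s) - c * ∫ s in p..q, K s = ∫ s in p..q, K s * (f s - c) := by
  simp_rw [mul_sub]
  rw [integral_sub (hK.mul_continuousOn hf) (hK.mul_const c), intervalIntegral.integral_mul_const]
  ring

section ProductIntegration

variable {γ T M p q : ℝ} {w w' w'' : ℝ → ℝ}

lemma abs_integral_kernel_mul_deriv_sub_le (hγ0 : 0 < γ) (hpq : p < q) (hqT : q < T)
    (hw' : ∀ s ∈ Icc p q, HasDerivAt w (w' s) s)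
    (hw'' : ∀ s ∈ Icc p q, HasDerivAt w' (w'' s) s) (hM : ∀ s ∈ Icc p q, |w'' s| ≤ M) :
    |(∫ s in p..q, (T - s) ^ (-γ) * w' s)
        - (w q - w p) / (q - p) * ∫ s in p..q, (T - s) ^ (-γ)|
      ≤ M * (q - p) ^ 2 * (γ * ∫ s in p..q, (T - s) ^ (-γ - 1)) := by
  have hIcc : uIcc p q = Icc p q := uIcc_of_le hpq.le
  have hw'c : ContinuousOn w' (Icc p q) :=
    fun s hs => (hw'' s hs).continuousAt.continuousWithinAt
  have hK1 : ContinuousOn (fun s => (T - s) ^ (-γ - 1)) (Icc p q) :=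
    continuousOn_sub_rpow _ hqT
  -- the interpolation error vanishes at both ends, so integrating by parts leaves no boundary term
  have hparts : ∫ s in p..q, (T - s) ^ (-γ) * (w' s - (w q - w p) / (q - p))
      = -∫ s in p..q, γ * (T - s) ^ (-γ - 1) * (w s - linInterp w p q s) := by
    rw [integral_mul_deriv_eq_deriv_mul (u' := fun s => γ * (T - s) ^ (-γ - 1))
      (v := fun s => w s - linInterp w p q s)
      (fun s hs => (hasDerivAt_sub_rpow (-γ) ((hIcc ▸ hs).2.trans_lt hqT)).congr_deriv
        (by ring_nf))
      (fun s hs => (hw' s (hIcc ▸ hs)).sub (hasDerivAt_linInterp w p q s))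
      ((hK1.intervalIntegrable_of_Icc hpq.le).const_mul γ)
      ((hw'c.sub continuousOn_const).intervalIntegrable_of_Icc hpq.le),
      linInterp_left, linInterp_right w hpq.ne]
    simp
  rw [integral_mul_sub_const_mul_integral _
    ((continuousOn_sub_rpow _ hqT).intervalIntegrable_of_Icc hpq.le) (hIcc ▸ hw'c), hparts,
    abs_neg, ← Real.norm_eq_abs, ← intervalIntegral.integral_const_mul,
    ← intervalIntegral.integral_const_mul]
  refine norm_integral_le_of_norm_le hpq.le (Filter.Eventually.of_forall fun s hs => ?_)
    (((hK1.intervalIntegrable_of_Icc hpq.le).const_mul γ).const_mul _)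
  have hK1s : 0 ≤ (T - s) ^ (-γ - 1) := rpow_nonneg (by linarith [hs.2]) _
  rw [Real.norm_eq_abs, abs_mul, abs_of_nonneg (by positivity)]
  calc γ * (T - s) ^ (-γ - 1) * |w s - linInterp w p q s|
      ≤ γ * (T - s) ^ (-γ - 1) * (M * (q - p) ^ 2) := by
        gcongr
        exact abs_sub_linInterp_le hw' hw'' hM hpq (Ioc_subset_Icc_self hs)
    _ = M * (q - p) ^ 2 * (γ * (T - s) ^ (-γ - 1)) := by ring

lemma abs_integral_kernel_mul_deriv_sub_le_of_right_eq (hγ1 : γ < 1) (hpT : p < T)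
    (hw' : ∀ s ∈ Icc p T, HasDerivAt w (w' s) s)
    (hw'' : ∀ s ∈ Icc p T, HasDerivAt w' (w'' s) s) (hM : ∀ s ∈ Icc p T, |w'' s| ≤ M) :
    |(∫ s in p..T, (T - s) ^ (-γ) * w' s)
        - (w T - w p) / (T - p) * ∫ s in p..T, (T - s) ^ (-γ)|
      ≤ M * (T - p) ^ (2 - γ) / (1 - γ) := by
  have hIcc : uIcc p T = Icc p T := uIcc_of_le hpT.le
  have hK := intervalIntegrable_sub_rpow (by linarith : -1 < -γ) T p T
  rw [integral_mul_sub_const_mul_integral _ hK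
    (hIcc ▸ fun s hs => (hw'' s hs).continuousAt.continuousWithinAt), ← Real.norm_eq_abs]
  calc _ ≤ ∫ s in p..T, M * (T - p) * (T - s) ^ (-γ) := by
        refine norm_integral_le_of_norm_le hpT.le (Filter.Eventually.of_forall fun s hs => ?_)
          (hK.const_mul _)
        have hKs : 0 ≤ (T - s) ^ (-γ) := rpow_nonneg (by linarith [hs.2]) _
        rw [Real.norm_eq_abs, abs_mul, abs_of_nonneg hKs, mul_comm]
        gcongr
        exact abs_deriv_sub_slope_le hw' hw'' hM hpT (Ioc_subset_Icc_self hs)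
    _ = M * (T - p) * ((T - p) ^ (-γ + 1) / (-γ + 1)) := by
        rw [intervalIntegral.integral_const_mul, integral_sub_rpow T (Or.inl (by linarith)),
          sub_self, zero_rpow (by linarith), sub_zero]
    _ = M * (T - p) ^ (2 - γ) / (1 - γ) := by
        rw [show -γ + 1 = 1 - γ by ring, show 2 - γ = 1 + (1 - γ) by ring,
          rpow_add (sub_pos.2 hpT), rpow_one]
        ring

end ProductIntegration

section Mesh

variable {γ M : ℝ} {w w' w'' : ℝ → ℝ} {n : ℕ} {t : ℕ → ℝ}

lemma apply_le_apply_of_lt_succ (ht : ∀ k < n, t k < t (k + 1)) {i j : ℕ} (hij : i ≤ j)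
    (hj : j ≤ n) : t i ≤ t j :=
  (strictMonoOn_Iic_of_lt_succ ht).monotoneOn (mem_Iic.2 (hij.trans hj)) (mem_Iic.2 hj) hij

theorem abs_integral_kernel_mul_deriv_sub_sum_le (hγ0 : 0 < γ) (hγ1 : γ < 1)
    (ht : ∀ j < n + 1, t j < t (j + 1))
    (hw' : ∀ s ∈ Icc (t 0) (t (n + 1)), HasDerivAt w (w' s) s)
    (hw'' : ∀ s ∈ Icc (t 0) (t (n + 1)), HasDerivAt w' (w'' s) s)
    (hM : ∀ s ∈ Icc (t 0) (t (n + 1)), |w'' s| ≤ M) :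
    |(∫ s in t 0..t (n + 1), (t (n + 1) - s) ^ (-γ) * w' s)
        - ∑ j ∈ range (n + 1), (w (t (j + 1)) - w (t j)) / (t (j + 1) - t j) *
            ∫ s in t j..t (j + 1), (t (n + 1) - s) ^ (-γ)|
      ≤ M * γ * (∑ j ∈ range n,
            (t (j + 1) - t j) ^ 2 * ∫ s in t j..t (j + 1), (t (n + 1) - s) ^ (-γ - 1))
        + M * (t (n + 1) - t n) ^ (2 - γ) / (1 - γ) := by
  have hsub : ∀ j < n + 1, Icc (t j) (t (j + 1)) ⊆ Icc (t 0) (t (n + 1)) := fun j hj =>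
    Icc_subset_Icc (apply_le_apply_of_lt_succ ht j.zero_le (by omega))
      (apply_le_apply_of_lt_succ ht hj le_rfl)
  have hw'c : ContinuousOn w' (Icc (t 0) (t (n + 1))) :=
    fun s hs => (hw'' s hs).continuousAt.continuousWithinAt
  have hint : ∀ j < n + 1, IntervalIntegrable (fun s => (t (n + 1) - s) ^ (-γ) * w' s) volume
      (t j) (t (j + 1)) := fun j hj =>
    (intervalIntegrable_sub_rpow (by linarith) _ _ _).mul_continuousOn
      (hw'c.mono ((uIcc_of_le (ht j hj).le).trans_subset (hsub j hj)))
  rw [← sum_integral_adjacent_intervals hint, ← sum_sub_distrib, sum_range_succ, mul_sum]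
  refine (abs_add_le _ _).trans (add_le_add ((abs_sum_le_sum_abs _ _).trans
    (sum_le_sum fun j hj => ?_)) ?_)
  · have hj : j < n := mem_range.1 hj
    refine (abs_integral_kernel_mul_deriv_sub_le hγ0 (ht j (by omega))
      ((apply_le_apply_of_lt_succ ht hj n.le_succ).trans_lt (ht n n.lt_succ_self))
      (fun s hs => hw' s (hsub j (by omega) hs)) (fun s hs => hw'' s (hsub j (by omega) hs))
      (fun s hs => hM s (hsub j (by omega) hs))).trans_eq (by ring)
  · exact abs_integral_kernel_mul_deriv_sub_le_of_right_eq hγ1 (ht n n.lt_succ_self)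
      (fun s hs => hw' s (hsub n n.lt_succ_self hs)) (fun s hs => hw'' s (hsub n n.lt_succ_self hs))
      (fun s hs => hM s (hsub n n.lt_succ_self hs))

lemma sum_sq_mul_integral_kernel_le_of_uniform (hγ0 : 0 < γ) {τ : ℝ}
    (ht : ∀ j < n + 1, t j < t (j + 1)) (hτ : ∀ j < n + 1, t (j + 1) - t j = τ) :
    ∑ j ∈ range n, (t (j + 1) - t j) ^ 2 * ∫ s in t j..t (j + 1), (t (n + 1) - s) ^ (-γ - 1)
      ≤ τ ^ (2 - γ) / γ := by
  have hτn : t (n + 1) - t n = τ := hτ n n.lt_succ_self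
  have hτ0 : 0 < τ := hτn ▸ sub_pos.2 (ht n n.lt_succ_self)
  have ht0n : t 0 ≤ t n := apply_le_apply_of_lt_succ ht n.zero_le n.le_succ
  have hint : ∀ j < n, IntervalIntegrable (fun s => (t (n + 1) - s) ^ (-γ - 1)) volume
      (t j) (t (j + 1)) := fun j hj =>
    (continuousOn_sub_rpow _ ((apply_le_apply_of_lt_succ ht hj n.le_succ).trans_lt
      (ht n n.lt_succ_self))).intervalIntegrable_of_Icc (ht j (by omega)).le
  calc _ = τ ^ 2 * ∫ s in t 0..t n, (t (n + 1) - s) ^ (-γ - 1) := by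
        rw [← sum_integral_adjacent_intervals hint, mul_sum]
        exact sum_congr rfl fun j hj => by rw [hτ j (by simp at hj; omega)]
    _ = τ ^ 2 * (τ ^ (-γ) - (t (n + 1) - t 0) ^ (-γ)) / γ := by
        rw [integral_sub_rpow _ (Or.inr ⟨by linarith, notMem_uIcc_of_lt (by linarith)
          (by linarith)⟩), hτn, show -γ - 1 + 1 = -γ by ring, div_neg, ← neg_div, neg_sub,
          mul_div_assoc]
    _ ≤ τ ^ 2 * τ ^ (-γ) / γ := by
        gcongr
        exact sub_le_self _ (rpow_nonneg (by linarith) _)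
    _ = τ ^ (2 - γ) / γ := by
        rw [← rpow_two, ← rpow_add hτ0, ← sub_eq_add_neg]

end Mesh

lemma one_div_mul_Gamma_one_sub_le {γ : ℝ} (hγ0 : 0 ≤ γ) (hγ1 : γ < 1) :
    1 / ((1 - γ) * Gamma (1 - γ)) ≤ 2 / Gamma (3 - γ) := by
  have h1γ : 0 < 1 - γ := sub_pos.2 hγ1
  have hΓ : 0 < (1 - γ) * Gamma (1 - γ) := mul_pos h1γ (Gamma_pos_of_pos h1γ)
  rw [div_le_div_iff₀ hΓ (Gamma_pos_of_pos (by linarith)), one_mul,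
    show 3 - γ = (1 - γ) + 1 + 1 by ring, Gamma_add_one (by linarith : (1 - γ) + 1 ≠ 0),
    Gamma_add_one h1γ.ne']
  exact mul_le_mul_of_nonneg_right (by linarith) hΓ.le

lemma div_Gamma_mul_le_of_le {γ c C S X τ : ℝ} (hγ0 : 0 ≤ γ) (hγ1 : γ < 1) (hc : 0 < c)
    (hτ : 0 ≤ C * τ ^ (2 - γ))
    (hX : X ≤ c⁻¹ * C * γ * S + c⁻¹ * C * τ ^ (2 - γ) / (1 - γ)) :
    c / Gamma (1 - γ) * X
      ≤ C * γ / Gamma (1 - γ) * S + 2 * C / Gamma (3 - γ) * τ ^ (2 - γ) := by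
  calc _ ≤ c / Gamma (1 - γ)
        * (c⁻¹ * C * γ * S + c⁻¹ * C * τ ^ (2 - γ) / (1 - γ)) := by gcongr
    _ = C * γ / Gamma (1 - γ) * S + 1 / ((1 - γ) * Gamma (1 - γ)) * (C * τ ^ (2 - γ)) := by
        field_simp
    _ ≤ C * γ / Gamma (1 - γ) * S + 2 / Gamma (3 - γ) * (C * τ ^ (2 - γ)) := by
        gcongr _ + ?_ * _
        exact one_div_mul_Gamma_one_sub_le hγ0 hγ1
    _ = _ := by ring

section Tempering

variable (a : ℝ) {v v' : ℝ → ℝ} {s : ℝ}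

lemma hasDerivAt_exp_mul_mul {v₁ : ℝ} (hv : HasDerivAt v v₁ s) :
    HasDerivAt (fun s => exp (a * s) * v s) (exp (a * s) * (v₁ + a * v s)) s :=
  (((hasDerivAt_id s).const_mul a).exp.mul hv).congr_deriv (by simp; ring)

lemma hasDerivAt_exp_mul_deriv_add {v'' : ℝ} (hv' : HasDerivAt v (v' s) s)
    (hv'' : HasDerivAt v' v'' s) :
    HasDerivAt (fun s => exp (a * s) * (v' s + a * v s))
      (exp (a * s) * (v'' + 2 * a * v' s + a ^ 2 * v s)) s :=
  (hasDerivAt_exp_mul_mul a (v := fun s => v' s + a * v s)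
    (hv''.add (hv'.const_mul a))).congr_deriv (by ring)

lemma abs_exp_mul_le {T x C : ℝ} (h : |exp (a * (s - T)) * x| ≤ C) :
    |exp (a * s) * x| ≤ (exp (-(a * T)))⁻¹ * C := by
  rw [← exp_neg, neg_neg, show a * s = a * T + a * (s - T) by ring, exp_add, mul_assoc, abs_mul,
    abs_of_pos (exp_pos _)]
  exact mul_le_mul_of_nonneg_left h (exp_pos _).le

end Tempering

theorem pi_remainder_bound_general
    (γ a : ℝ) (hγ0 : 0 < γ) (hγ1 : γ < 1)
    (n : ℕ) (hn : 1 ≤ n)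
    (t : ℕ → ℝ) (ht0 : t 0 = 0) (hmono : ∀ j < n, t j < t (j + 1))
    (v v' v'' : ℝ → ℝ)
    (hv' : ∀ s ∈ Set.Icc 0 (t n), HasDerivAt v (v' s) s)
    (hv'' : ∀ s ∈ Set.Icc 0 (t n), HasDerivAt v' (v'' s) s)
    (C : ℝ)
    (hC : ∀ s ∈ Set.Icc 0 (t n),
      |Real.exp (a * (s - t n)) * (v'' s + 2 * a * v' s + a ^ 2 * v s)| ≤ C)
    (R : ℝ)
    (hR : R =
      Real.exp (-(a * t n)) / Real.Gamma (1 - γ) *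
          (∫ s in (0:ℝ)..(t n), (t n - s) ^ (-γ) * (Real.exp (a * s) * (v' s + a * v s)))
        - Real.exp (-(a * t n)) / Real.Gamma (1 - γ) *
            ∑ j ∈ Finset.range n,
              ((Real.exp (a * t (j + 1)) * v (t (j + 1)) - Real.exp (a * t j) * v (t j))
                  / (t (j + 1) - t j)) *
                ∫ s in (t j)..(t (j + 1)), (t n - s) ^ (-γ)) :
    |R| ≤ C * γ / Real.Gamma (1 - γ) *
            (∑ j ∈ Finset.range (n - 1),
              (t (j + 1) - t j) ^ 2 * ∫ s in (t j)..(t (j + 1)), (t n - s) ^ (-γ - 1))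
          + 2 * C / Real.Gamma (3 - γ) * (t n - t (n - 1)) ^ (2 - γ)
      ∧ ∀ τ : ℝ, (∀ j < n, t (j + 1) - t j = τ) →
          |R| ≤ (1 / Real.Gamma (1 - γ) + 2 / Real.Gamma (3 - γ)) * C * τ ^ (2 - γ) := by
  obtain ⟨n, rfl⟩ : ∃ m, n = m + 1 := ⟨n - 1, by omega⟩
  rw [Nat.add_sub_cancel]
  set T := t (n + 1)
  have hT : 0 < T :=
    ht0 ▸ (apply_le_apply_of_lt_succ hmono n.zero_le n.le_succ).trans_lt (hmono n n.lt_succ_self)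
  have hC0 : 0 ≤ C := (abs_nonneg _).trans (hC 0 ⟨le_rfl, hT.le⟩)
  have hrem := abs_integral_kernel_mul_deriv_sub_sum_le hγ0 hγ1 hmono
    (fun s hs => hasDerivAt_exp_mul_mul a (hv' s (ht0 ▸ hs)))
    (fun s hs => hasDerivAt_exp_mul_deriv_add a (hv' s (ht0 ▸ hs)) (hv'' s (ht0 ▸ hs)))
    (fun s hs => abs_exp_mul_le a (hC s (ht0 ▸ hs)))
  rw [ht0] at hrem
  have hmain : |R| ≤ C * γ / Gamma (1 - γ) * (∑ j ∈ range n,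
        (t (j + 1) - t j) ^ 2 * ∫ s in t j..t (j + 1), (T - s) ^ (-γ - 1))
      + 2 * C / Gamma (3 - γ) * (T - t n) ^ (2 - γ) := by
    rw [hR, ← mul_sub, abs_mul, abs_of_pos (div_pos (exp_pos _) (Gamma_pos_of_pos (by linarith)))]
    exact div_Gamma_mul_le_of_le hγ0.le hγ1 (exp_pos _)
      (mul_nonneg hC0 (rpow_nonneg (sub_pos.2 (hmono n n.lt_succ_self)).le _)) hrem
  refine ⟨hmain, fun τ hτ => hmain.trans ?_⟩
  calc _ ≤ C * γ / Gamma (1 - γ) * (τ ^ (2 - γ) / γ)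
        + 2 * C / Gamma (3 - γ) * τ ^ (2 - γ) := by
        rw [hτ n n.lt_succ_self]
        gcongr
        exact sum_sq_mul_integral_kernel_le_of_uniform hγ0 hmono hτ
    _ = _ := by field_simp

/-- error bound for the product-integration (PI) discretization of the
Caputo fractional substantial derivative. Here `v', v''` are the first and second
derivatives of `v` on `[0, t n]`, the Caputo derivative is
`(ˢD_{*,t}^γ v)(t_n) = (e^{−a t_n}/Γ(1−γ)) ∫₀^{t_n} (t_n−s)^{−γ} e^{a s}(v'(s)+a v(s)) ds`,
and `T_j' = (e^{a t_{j+1}}v(t_{j+1}) − e^{a t_j}v(t_j))/τ_j` is the slope of the affine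
interpolant of `w = e^{a·}v` on `[t_j, t_{j+1}]`. -/
theorem pi_remainder_bound
    (γ a : ℝ) (hγ0 : 0 < γ) (hγ1 : γ < 1) (ha : 0 ≤ a)
    (n : ℕ) (hn : 1 ≤ n)
    (t : ℕ → ℝ) (ht0 : t 0 = 0) (hmono : ∀ j < n, t j < t (j + 1))
    (v v' v'' : ℝ → ℝ)
    (hv' : ∀ s ∈ Set.Icc 0 (t n), HasDerivAt v (v' s) s)
    (hv'' : ∀ s ∈ Set.Icc 0 (t n), HasDerivAt v' (v'' s) s)
    (hv''c : ContinuousOn v'' (Set.Icc 0 (t n)))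
    (C : ℝ)
    (hC : ∀ s ∈ Set.Icc 0 (t n),
      |Real.exp (a * (s - t n)) * (v'' s + 2 * a * v' s + a ^ 2 * v s)| ≤ C)
    (R : ℝ)
    (hR : R =
      Real.exp (-(a * t n)) / Real.Gamma (1 - γ) *
          (∫ s in (0:ℝ)..(t n), (t n - s) ^ (-γ) * (Real.exp (a * s) * (v' s + a * v s)))
        - Real.exp (-(a * t n)) / Real.Gamma (1 - γ) *
            ∑ j ∈ Finset.range n,
              ((Real.exp (a * t (j + 1)) * v (t (j + 1)) - Real.exp (a * t j) * v (t j))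
                  / (t (j + 1) - t j)) *
                ∫ s in (t j)..(t (j + 1)), (t n - s) ^ (-γ)) :
    |R| ≤ C * γ / Real.Gamma (1 - γ) *
            (∑ j ∈ Finset.range (n - 1),
              (t (j + 1) - t j) ^ 2 * ∫ s in (t j)..(t (j + 1)), (t n - s) ^ (-γ - 1))
          + 2 * C / Real.Gamma (3 - γ) * (t n - t (n - 1)) ^ (2 - γ)
      ∧ ∀ τ : ℝ, (∀ j < n, t (j + 1) - t j = τ) →
          |R| ≤ (1 / Real.Gamma (1 - γ) + 2 / Real.Gamma (3 - γ)) * C * τ ^ (2 - γ) :=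
  pi_remainder_bound_general γ a hγ0 hγ1 n hn t ht0 hmono v v' v'' hv' hv'' C hC R hR
end

section
/- Let a≥0 be real. Let (Q_n)_{n≥0} be a nonincreasing sequence of nonnegative reals with Q_{−1}:=0, and let (L_n)_{n≥0} be nonnegative reals with L₀ = Q₀, L_n ≤ Q_{n−1} for every n≥1, and additionally Q_n ≤ L_n for every n≥1. Then for every integer n≥1 and all reals V₀,…,V_n: ( Σ_{l=0}^{n−1} e^{−a l}(Q_l − Q_{l−1}) V_{n−l} + e^{−a n}(L_n − Q_{n−1}) V₀ ) · V_n ≥ (1/2) Σ_{l=0}^{n} e^{−a l} Q_l V_{n−l}² − (1/2) Σ_{l=0}^{n−1} e^{−a l} Q_l V_{n−1−l}² + (L_n/2) V_n². -/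
/-!
With `w l = e^{-a l}`, `q l = w l * Q l` and the quadrature coefficients `c 0 = Q 0`,
`c l = Q l - Q (l-1)` for `0 < l < n`, `c n = L n - Q (n-1)`, the left-hand side is
`∑ w l c l V (n-l) V n` and `∑ c l = L n`. The `l = 0` term matches exactly. For `l ≥ 1` the
coefficient `c l` is nonpositive, so `2 x y ≥ -(x² + y²)` bounds the cross term below by squares;
since `w` decreases and `Q n ≤ L n`, `q l - q (l-1) ≤ w l c l`, and the squares telescope.
-/

open Finset

theorem sub_mul_sq_div_two_add_le_mul_mul {w c s x y : ℝ} (hw₀ : 0 ≤ w) (hw₁ : w ≤ 1)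
    (hc : c ≤ 0) (hs : s ≤ w * c) :
    s * x ^ 2 / 2 + c * y ^ 2 / 2 ≤ w * c * x * y := by
  nlinarith [mul_nonneg (sub_nonneg.2 hs) (sq_nonneg x),
    mul_nonneg (mul_nonneg (sub_nonneg.2 hw₁) (neg_nonneg.2 hc)) (sq_nonneg y),
    mul_nonneg (mul_nonneg hw₀ (neg_nonneg.2 hc)) (sq_nonneg (x - y))]

theorem mul_sub_mul_le_mul_sub {w w' Q Q' L : ℝ} (hw' : 0 ≤ w') (hw : w' ≤ w) (hQ' : 0 ≤ Q')
    (hQL : Q ≤ L) : w' * Q - w * Q' ≤ w' * (L - Q') := by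
  nlinarith [mul_le_mul_of_nonneg_right hw hQ', mul_le_mul_of_nonneg_left hQL hw']

theorem sum_range_succ_sub_prev {G : Type*} [AddCommGroup G] (f : ℕ → G) (n : ℕ) :
    ∑ l ∈ range (n + 1), (f l - if l = 0 then 0 else f (l - 1)) = f n := by
  induction n with
  | zero => simp
  | succ n ih => rw [sum_range_succ, ih]; simp

theorem energy_le_convolution {w c q V : ℕ → ℝ} {n : ℕ} (hw0 : w 0 = 1) (hc0 : c 0 = q 0)
    (hw : ∀ l < n, 0 ≤ w (l + 1) ∧ w (l + 1) ≤ 1) (hc : ∀ l < n, c (l + 1) ≤ 0)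
    (hq : ∀ l < n, q (l + 1) - q l ≤ w (l + 1) * c (l + 1)) :
    1 / 2 * ∑ l ∈ range (n + 1), q l * V (n - l) ^ 2
        - 1 / 2 * ∑ l ∈ range n, q l * V (n - 1 - l) ^ 2
        + (∑ l ∈ range (n + 1), c l) / 2 * V n ^ 2
      ≤ (∑ l ∈ range (n + 1), w l * c l * V (n - l)) * V n := by
  have hshift : ∀ l ∈ range n, q l * V (n - 1 - l) ^ 2 = q l * V (n - (l + 1)) ^ 2 :=
    fun l _ => by rw [Nat.sub_sub, Nat.add_comm 1]
  calc _ = ∑ l ∈ range n, ((q (l + 1) - q l) * V (n - (l + 1)) ^ 2 / 2 + c (l + 1) * V n ^ 2 / 2)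
          + q 0 * V n ^ 2 := by
        rw [sum_congr rfl hshift, sum_range_succ', sum_range_succ' c, hc0]
        simp only [sub_mul, sum_add_distrib, sum_sub_distrib, ← sum_div, ← sum_mul, Nat.sub_zero]
        ring
    _ ≤ ∑ l ∈ range n, w (l + 1) * c (l + 1) * V (n - (l + 1)) * V n + q 0 * V n ^ 2 := by
        gcongr with l hl
        rw [mem_range] at hl
        exact sub_mul_sq_div_two_add_le_mul_mul (hw l hl).1 (hw l hl).2 (hc l hl) (hq l hl)
    _ = _ := by
        rw [sum_range_succ', add_mul, sum_mul, hw0, hc0, Nat.sub_zero]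
        ring

def quadCoeff (Q L : ℕ → ℝ) (n l : ℕ) : ℝ :=
  if l = n then L n - Q (n - 1) else Q l - if l = 0 then 0 else Q (l - 1)

section quadCoeff

variable {Q L : ℕ → ℝ}

theorem sum_range_succ_mul_quadCoeff_mul (f g : ℕ → ℝ) (n : ℕ) :
    ∑ l ∈ range (n + 1), f l * quadCoeff Q L n l * g l
      = ∑ l ∈ range n, f l * (Q l - if l = 0 then 0 else Q (l - 1)) * g l
        + f n * (L n - Q (n - 1)) * g n := by
  rw [sum_range_succ, quadCoeff, if_pos rfl]
  congr 1
  refine sum_congr rfl fun l hl => ?_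
  rw [quadCoeff, if_neg (mem_range.1 hl).ne]

theorem sum_range_quadCoeff (n : ℕ) : ∑ l ∈ range (n + 2), quadCoeff Q L (n + 1) l = L (n + 1) := by
  rw [sum_range_succ, quadCoeff, if_pos rfl, Nat.add_sub_cancel]
  rw [sum_congr rfl fun l hl => by rw [quadCoeff, if_neg (mem_range.1 hl).ne], sum_range_succ_sub_prev]
  ring

theorem quadCoeff_succ_nonpos (hQmono : ∀ n, Q (n + 1) ≤ Q n) (hLQ : ∀ n, L (n + 1) ≤ Q n)
    {n l : ℕ} (hl : l < n) : quadCoeff Q L n (l + 1) ≤ 0 := by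
  rw [quadCoeff, if_neg l.succ_ne_zero, Nat.add_sub_cancel]
  split_ifs with h
  · obtain rfl := h
    simpa using hLQ l
  · simpa using hQmono l

theorem mul_sub_mul_le_mul_quadCoeff {w : ℕ → ℝ} (hQnn : ∀ n, 0 ≤ Q n)
    (hQL : ∀ n, Q (n + 1) ≤ L (n + 1)) {n l : ℕ} (hw₀ : 0 ≤ w (l + 1)) (hw : w (l + 1) ≤ w l) :
    w (l + 1) * Q (l + 1) - w l * Q l ≤ w (l + 1) * quadCoeff Q L n (l + 1) := by
  rw [quadCoeff, if_neg l.succ_ne_zero, Nat.add_sub_cancel]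
  split_ifs with h
  · obtain rfl := h
    simpa using mul_sub_mul_le_mul_sub hw₀ hw (hQnn l) (hQL l)
  · exact mul_sub_mul_le_mul_sub hw₀ hw (hQnn l) le_rfl

end quadCoeff

theorem discrete_substantial_energy_inequality_general
    (a : ℝ) (ha : 0 ≤ a)
    (Q L : ℕ → ℝ)
    (hQnn : ∀ n, 0 ≤ Q n) (hQmono : ∀ n, Q (n + 1) ≤ Q n)
    (hLQ : ∀ n, L (n + 1) ≤ Q n)
    (hQL : ∀ n, Q (n + 1) ≤ L (n + 1))
    (n : ℕ) (hn : 1 ≤ n) (V : ℕ → ℝ) :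
    ((∑ l ∈ Finset.range n,
        Real.exp (-(a * (l : ℝ))) * (Q l - if l = 0 then 0 else Q (l - 1)) * V (n - l))
      + Real.exp (-(a * (n : ℝ))) * (L n - Q (n - 1)) * V 0) * V n
    ≥ (1 / 2) * (∑ l ∈ Finset.range (n + 1),
          Real.exp (-(a * (l : ℝ))) * Q l * (V (n - l)) ^ 2)
      - (1 / 2) * (∑ l ∈ Finset.range n,
          Real.exp (-(a * (l : ℝ))) * Q l * (V (n - 1 - l)) ^ 2)
      + (L n / 2) * (V n) ^ 2 := by
  obtain ⟨m, rfl⟩ : ∃ m, n = m + 1 := ⟨n - 1, by omega⟩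
  have hw_anti : Antitone fun l : ℕ => Real.exp (-(a * l)) := fun k l hkl => by
    dsimp only
    gcongr
  have hw_le_one (l : ℕ) : Real.exp (-(a * l)) ≤ 1 := by simpa using hw_anti (Nat.zero_le l)
  have h := energy_le_convolution (n := m + 1) (V := V) (w := fun l : ℕ => Real.exp (-(a * l)))
    (c := quadCoeff Q L (m + 1)) (q := fun l => Real.exp (-(a * l)) * Q l)
    (by simp) (by simp [quadCoeff])
    (fun l _ => ⟨(Real.exp_pos _).le, hw_le_one _⟩)
    (fun l hl => quadCoeff_succ_nonpos hQmono hLQ hl)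
    (fun l _ => mul_sub_mul_le_mul_quadCoeff (w := fun l : ℕ => Real.exp (-(a * l))) hQnn hQL
      (Real.exp_pos _).le (hw_anti l.le_succ))
  rwa [sum_range_quadCoeff, sum_range_succ_mul_quadCoeff_mul, Nat.sub_self] at h

/-- discrete energy inequality for the substantial-derivative quadrature.
`Q` is a nonincreasing sequence of nonnegative reals (convention `Q_{−1} = 0` encoded
by the `if l = 0` clause), `L` is nonnegative with `L 0 = Q 0`, `L (n+1) ≤ Q n`, and
additionally `Q (n+1) ≤ L (n+1)`. -/
theorem discrete_substantial_energy_inequality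
    (a : ℝ) (ha : 0 ≤ a)
    (Q L : ℕ → ℝ)
    (hQnn : ∀ n, 0 ≤ Q n) (hQmono : ∀ n, Q (n + 1) ≤ Q n)
    (hLnn : ∀ n, 0 ≤ L n) (hL0 : L 0 = Q 0) (hLQ : ∀ n, L (n + 1) ≤ Q n)
    (hQL : ∀ n, Q (n + 1) ≤ L (n + 1))
    (n : ℕ) (hn : 1 ≤ n) (V : ℕ → ℝ) :
    ((∑ l ∈ Finset.range n,
        Real.exp (-(a * (l : ℝ))) * (Q l - if l = 0 then 0 else Q (l - 1)) * V (n - l))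
      + Real.exp (-(a * (n : ℝ))) * (L n - Q (n - 1)) * V 0) * V n
    ≥ (1 / 2) * (∑ l ∈ Finset.range (n + 1),
          Real.exp (-(a * (l : ℝ))) * Q l * (V (n - l)) ^ 2)
      - (1 / 2) * (∑ l ∈ Finset.range n,
          Real.exp (-(a * (l : ℝ))) * Q l * (V (n - 1 - l)) ^ 2)
      + (L n / 2) * (V n) ^ 2 :=
  discrete_substantial_energy_inequality_general a ha Q L hQnn hQmono hLQ hQL n hn V
end

section
/- Let a≥0 be real, n a positive integer, and let Q₀ ≥ Q₁ ≥ ⋯ ≥ Q_{n−1} > 0 be positive reals with the convention Q_{−1}:=0. For any reals V₀,…,V_n define L V_n = Σ_{l=0}^{n−1} e^{−a l}(Q_l − Q_{l−1}) V_{n−l} − e^{−a n} Q_{n−1} V₀. Then V_n · L V_n ≥ (Q₀/2 + Q_{n−1}/4)·V_n² + (1/2) Σ_{l=1}^{n−1} e^{−2a l}(Q_l − Q_{l−1}) V_{n−l}² − e^{−2a n} Q_{n−1} V₀². -/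
open Real Finset

/-! With `d_l = Q_{l-1} - Q_l ≥ 0`, each cross term `d_l e^{-al} V_n V_{n-l}` is bounded by
Young's inequality `2xy ≤ x² + y²` with weight `d_l`, and the weights telescope to
`Q₀ - Q_{n-1}`. The boundary term is bounded by `xy ≤ x²/4 + y²` with weight `Q_{n-1}`.
The coefficients of `V_n²` then add up to `Q₀ - (Q₀ - Q_{n-1})/2 - Q_{n-1}/4`. -/

theorem sum_Ico_one_sub_telescope {M : Type*} [AddCommGroup M] (f : ℕ → M) (n : ℕ) :
    ∑ l ∈ Ico 1 n, (f (l - 1) - f l) = f 0 - f (n - 1) := by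
  rw [sum_Ico_eq_sum_range, ← sum_range_sub' f (n - 1)]
  refine sum_congr rfl fun k _ => ?_
  rw [Nat.add_sub_cancel_left, add_comm]

theorem mul_sum_le_half_sum_sq {ι : Type*} (s : Finset ι) (d y : ι → ℝ)
    (hd : ∀ i ∈ s, 0 ≤ d i) (x : ℝ) :
    x * ∑ i ∈ s, d i * y i
      ≤ (∑ i ∈ s, d i) / 2 * x ^ 2 + (∑ i ∈ s, d i * y i ^ 2) / 2 := by
  rw [mul_sum, sum_div, sum_div, sum_mul, ← sum_add_distrib]
  exact sum_le_sum fun i hi => by nlinarith [mul_nonneg (hd i hi) (sq_nonneg (x - y i))]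

theorem mul_mul_le_quarter_sq_add_sq {c : ℝ} (hc : 0 ≤ c) (x y : ℝ) :
    c * (x * y) ≤ c / 4 * x ^ 2 + c * y ^ 2 := by
  nlinarith [mul_nonneg hc (sq_nonneg (x / 2 - y))]

theorem discrete_caputo_coercivity_general
    (a : ℝ) (n : ℕ) (hn : 1 ≤ n)
    (Q : ℕ → ℝ)
    (hQmono : ∀ l, l + 1 < n → Q (l + 1) ≤ Q l)
    (hQpos : 0 < Q (n - 1))
    (V : ℕ → ℝ) :
    V n * ((∑ l ∈ Finset.range n,
          Real.exp (-(a * (l : ℝ))) * (Q l - if l = 0 then 0 else Q (l - 1)) * V (n - l))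
        - Real.exp (-(a * (n : ℝ))) * Q (n - 1) * V 0)
    ≥ (Q 0 / 2 + Q (n - 1) / 4) * (V n) ^ 2
      + (1 / 2) * (∑ l ∈ Finset.Ico 1 n,
          Real.exp (-(2 * a * (l : ℝ))) * (Q l - Q (l - 1)) * (V (n - l)) ^ 2)
      - Real.exp (-(2 * a * (n : ℝ))) * Q (n - 1) * (V 0) ^ 2 := by
  have hexp_sq (x : ℝ) : exp (-(2 * a * x)) = exp (-(a * x)) ^ 2 := by
    rw [sq, ← exp_add]; ring_nf
  have hQ_step : ∀ l ∈ Ico 1 n, 0 ≤ Q (l - 1) - Q l := fun l hl => by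
    obtain ⟨hl1, hln⟩ := mem_Ico.mp hl
    have := hQmono (l - 1) (by omega)
    rw [Nat.sub_add_cancel hl1] at this
    linarith
  have hsplit : ∑ l ∈ range n,
        exp (-(a * l)) * (Q l - if l = 0 then 0 else Q (l - 1)) * V (n - l)
      = Q 0 * V n + ∑ l ∈ Ico 1 n, exp (-(a * l)) * (Q l - Q (l - 1)) * V (n - l) := by
    rw [sum_range_eq_add_Ico _ (by omega)]
    congr 1
    · simp
    · exact sum_congr rfl fun l hl => by rw [if_neg (by grind)]
  have hcross : ∑ l ∈ Ico 1 n, exp (-(a * l)) * (Q l - Q (l - 1)) * V (n - l)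
      = -∑ l ∈ Ico 1 n, (Q (l - 1) - Q l) * (exp (-(a * l)) * V (n - l)) := by
    rw [← sum_neg_distrib]
    exact sum_congr rfl fun l _ => by ring
  have hsq : ∑ l ∈ Ico 1 n, exp (-(2 * a * l)) * (Q l - Q (l - 1)) * V (n - l) ^ 2
      = -∑ l ∈ Ico 1 n, (Q (l - 1) - Q l) * (exp (-(a * l)) * V (n - l)) ^ 2 := by
    rw [← sum_neg_distrib]
    exact sum_congr rfl fun l _ => by rw [hexp_sq]; ring
  have hinterior :=
    mul_sum_le_half_sum_sq _ _ (fun l : ℕ => exp (-(a * l)) * V (n - l)) hQ_step (V n)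
  rw [sum_Ico_one_sub_telescope Q] at hinterior
  have hboundary := mul_mul_le_quarter_sq_add_sq hQpos.le (V n) (exp (-(a * n)) * V 0)
  rw [hsplit, hcross, hsq, hexp_sq]
  linear_combination hinterior + hboundary

/-- discrete coercivity inequality for the Caputo substantial quadrature.
With `Q₀ ≥ Q₁ ≥ ⋯ ≥ Q_{n−1} > 0` (convention `Q_{−1} = 0`, encoded by the `if l = 0`
clause) and `L V_n = Σ_{l=0}^{n−1} e^{−a l}(Q_l − Q_{l−1}) V_{n−l} − e^{−a n} Q_{n−1} V₀`,
one has the stated lower bound for `V_n · L V_n`. -/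
theorem discrete_caputo_coercivity
    (a : ℝ) (ha : 0 ≤ a) (n : ℕ) (hn : 1 ≤ n)
    (Q : ℕ → ℝ)
    (hQmono : ∀ l, l + 1 < n → Q (l + 1) ≤ Q l)
    (hQpos : 0 < Q (n - 1))
    (V : ℕ → ℝ) :
    V n * ((∑ l ∈ Finset.range n,
          Real.exp (-(a * (l : ℝ))) * (Q l - if l = 0 then 0 else Q (l - 1)) * V (n - l))
        - Real.exp (-(a * (n : ℝ))) * Q (n - 1) * V 0)
    ≥ (Q 0 / 2 + Q (n - 1) / 4) * (V n) ^ 2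
      + (1 / 2) * (∑ l ∈ Finset.Ico 1 n,
          Real.exp (-(2 * a * (l : ℝ))) * (Q l - Q (l - 1)) * (V (n - l)) ^ 2)
      - Real.exp (-(2 * a * (n : ℝ))) * Q (n - 1) * (V 0) ^ 2 :=
  discrete_caputo_coercivity_general a n hn Q hQmono hQpos V
end

section
/- Let 0<γ<1, let n be a positive integer, and let 0 = t₀ < t₁ < ⋯ < t_n be an arbitrary mesh with τ_j = t_{j+1} − t_j. For j = 0,…,n−1 define Q̃_j = (1/(Γ(1−γ)·τ_{n−1−j})) ∫_{t_{n−1−j}}^{t_{n−j}} (t_n − s)^{−γ} ds. Then Q̃₀ > Q̃₁ > ⋯ > Q̃_{n−1} > 0, and t_n^{−γ}/Γ(1−γ) ≤ Q̃_{n−1}. -/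
open Real MeasureTheory intervalIntegral

/-- PI quadrature coefficients of the Caputo fractional substantial derivative of order
`γ` on the non-uniform mesh `0 = t₀ < t₁ < ⋯ < t_n`:
`Q̃_j = (1/(Γ(1−γ)·τ_{n−1−j})) ∫_{t_{n−1−j}}^{t_{n−j}} (t_n − s)^{−γ} ds`,
where `τ_j = t_{j+1} − t_j`. -/
noncomputable def Qtil (γ : ℝ) (n : ℕ) (t : ℕ → ℝ) (j : ℕ) : ℝ :=
  (1 / (Real.Gamma (1 - γ) * (t (n - j) - t (n - 1 - j)))) *
    ∫ s in (t (n - 1 - j))..(t (n - j)), (t n - s) ^ (-γ)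

lemma integ_rpow_sub (γ : ℝ) (hγ1 : γ < 1) (T a b : ℝ) :
    (∫ s in a..b, (T - s) ^ (-γ)) =
      ((T - a) ^ (1 - γ) - (T - b) ^ (1 - γ)) / (1 - γ) := by
  rw [intervalIntegral.integral_comp_sub_left (fun u => u ^ (-γ)) T,
    integral_rpow (Or.inl (by linarith))]
  simp only [show -γ + 1 = 1 - γ by ring]

lemma Qtil_eq (γ : ℝ) (hγ1 : γ < 1) (n : ℕ) (t : ℕ → ℝ) (j : ℕ) :
    Qtil γ n t j =
      (((t n - t (n - 1 - j)) ^ (1 - γ) - (t n - t (n - j)) ^ (1 - γ))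
          / (t (n - j) - t (n - 1 - j)))
        / (Real.Gamma (1 - γ) * (1 - γ)) := by
  rw [Qtil, integ_rpow_sub γ hγ1]
  field_simp

/-- on an arbitrary mesh `0 = t₀ < t₁ < ⋯ < t_n`, the PI coefficients
satisfy `Q̃₀ > Q̃₁ > ⋯ > Q̃_{n−1} > 0` and `t_n^{−γ}/Γ(1−γ) ≤ Q̃_{n−1}`. -/
theorem pi_nonuniform_coefficients_properties
    (γ : ℝ) (hγ0 : 0 < γ) (hγ1 : γ < 1)
    (n : ℕ) (hn : 1 ≤ n)
    (t : ℕ → ℝ) (ht0 : t 0 = 0) (hmono : ∀ j < n, t j < t (j + 1)) :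
    (∀ j : ℕ, j + 2 ≤ n → Qtil γ n t (j + 1) < Qtil γ n t j)
      ∧ (∀ j : ℕ, j < n → 0 < Qtil γ n t j)
      ∧ (t n) ^ (-γ) / Real.Gamma (1 - γ) ≤ Qtil γ n t (n - 1) := by
  set p : ℝ := 1 - γ with hp
  have hp0 : 0 < p := by linarith
  have hp1 : p < 1 := by linarith
  have hΓ : 0 < Real.Gamma (1 - γ) := Real.Gamma_pos_of_pos hp0
  have hΓp : 0 < Real.Gamma (1 - γ) * (1 - γ) := mul_pos hΓ hp0
  -- strict monotonicity of the mesh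
  have tm : ∀ i j : ℕ, i < j → j ≤ n → t i < t j := by
    intro i j hij hjn
    induction j with
    | zero => omega
    | succ k ih =>
      rcases Nat.lt_succ_iff_lt_or_eq.mp hij with h | h
      · exact (ih h (by omega)).trans (hmono k (by omega))
      · subst h; exact hmono i (by omega)
  have tle : ∀ i, i ≤ n → t i ≤ t n := by
    intro i hi
    rcases eq_or_lt_of_le hi with h | h
    · rw [h]
    · exact (tm i n h le_rfl).le
  set T := t n with hT
  refine ⟨?_, ?_, ?_⟩
  · -- strictly decreasing
    intro j hj
    have e1 : n - (j + 1) = n - 1 - j := by omega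
    have e2 : n - 1 - (j + 1) = n - 2 - j := by omega
    rw [Qtil_eq γ hγ1, Qtil_eq γ hγ1, e1, e2]
    set x := T - t (n - j) with hx
    set y := T - t (n - 1 - j) with hy
    set z := T - t (n - 2 - j) with hz
    have hx0 : (0:ℝ) ≤ x := by
      have := tle (n - j) (by omega); simp [hx]; linarith
    have hxy : x < y := by
      have := tm (n - 1 - j) (n - j) (by omega) (by omega)
      simp [hx, hy]; linarith
    have hyz : y < z := by
      have := tm (n - 2 - j) (n - 1 - j) (by omega) (by omega)
      simp [hy, hz]; linarith
    have hz0 : (0:ℝ) ≤ z := by linarith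
    have slope := (Real.strictConcaveOn_rpow hp0 hp1).slope_anti_adjacent
      (Set.mem_Ici.mpr hx0) (Set.mem_Ici.mpr hz0) hxy hyz
    have ey : t (n - 1 - j) - t (n - 2 - j) = z - y := by simp only [hy, hz]; ring
    have ex : t (n - j) - t (n - 1 - j) = y - x := by simp only [hx, hy]; ring
    rw [ey, ex]
    rw [← hp]
    exact (div_lt_div_iff_of_pos_right hΓp).mpr slope
  · -- positivity
    intro j hj
    rw [Qtil_eq γ hγ1]
    have hab : t (n - 1 - j) < t (n - j) := tm _ _ (by omega) (by omega)
    have hbT : t (n - j) ≤ T := tle _ (by omega)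
    have h1 : (0:ℝ) ≤ T - t (n - j) := by linarith
    have h2 : T - t (n - j) < T - t (n - 1 - j) := by linarith
    have h3 : (T - t (n - j)) ^ (1 - γ) < (T - t (n - 1 - j)) ^ (1 - γ) :=
      Real.rpow_lt_rpow h1 h2 hp0
    exact div_pos (div_pos (by linarith) (by linarith)) hΓp
  · -- lower bound on the last coefficient
    have e1 : n - (n - 1) = 1 := by omega
    have e2 : n - 1 - (n - 1) = 0 := by omega
    rw [Qtil_eq γ hγ1, e1, e2, ht0, sub_zero]
    have ht1 : 0 < t 1 := by rw [← ht0]; exact hmono 0 (by omega)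
    have ht1T : t 1 ≤ T := tle 1 (by omega)
    have hT0 : 0 < T := lt_of_lt_of_le ht1 ht1T
    -- Bernoulli
    have hs : (-1:ℝ) ≤ -(t 1 / T) := by
      rw [neg_le_neg_iff]
      exact div_le_one_of_le₀ ht1T hT0.le
    have hb := rpow_one_add_le_one_add_mul_self hs hp0.le hp1.le
    have e3 : (1 + -(t 1 / T)) = (T - t 1) / T := by field_simp; ring
    rw [e3, Real.div_rpow (by linarith) hT0.le] at hb
    have hTp : 0 < T ^ p := Real.rpow_pos_of_pos hT0 p
    have eγ : T ^ (-γ) = T ^ p / T := by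
      rw [show (-γ) = p - 1 by rw [hp]; ring, Real.rpow_sub hT0, Real.rpow_one]
    have key : p * t 1 * T ^ (-γ) ≤ T ^ p - (T - t 1) ^ p := by
      rw [eγ]
      have := mul_le_mul_of_nonneg_right hb hTp.le
      rw [div_mul_cancel₀ _ hTp.ne'] at this
      have hfin : (1 + p * -(t 1 / T)) * T ^ p = T ^ p - p * t 1 * (T ^ p / T) := by
        field_simp; ring
      linarith [this, hfin]
    rw [← hp]
    calc T ^ (-γ) / Real.Gamma (1 - γ)
        = (p * t 1 * T ^ (-γ)) / (t 1) / (Real.Gamma (1 - γ) * p) := by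
          field_simp
      _ ≤ (T ^ p - (T - t 1) ^ p) / (t 1) / (Real.Gamma (1 - γ) * p) := by
          gcongr
      _ = (T ^ p - (T - t 1) ^ p) / (t 1 - 0) / (Real.Gamma (1 - γ) * p) := by
          rw [sub_zero]
end

section
/- Let 0<γ<1, a≥0 real, let 0 = t₀ < t₁ < ⋯ < t_n be an arbitrary mesh with τ_j = t_{j+1} − t_j, and define Q̃_j = (1/(Γ(1−γ)·τ_{n−1−j})) ∫_{t_{n−1−j}}^{t_{n−j}} (t_n − s)^{−γ} ds for j = 0,…,n−1, with Q̃_{−1}:=0. For reals V₀,…,V_n define L̃ V_n = Σ_{l=0}^{n−1} e^{a(t_{n−l}−t_n)} (Q̃_l − Q̃_{l−1}) V_{n−l} − e^{−a t_n} Q̃_{n−1} V₀. Then V_n · L̃ V_n ≥ (Q̃₀/2 + Q̃_{n−1}/4)·V_n² + (1/2) Σ_{l=1}^{n−1} e^{2a(t_{n−l}−t_n)} (Q̃_l − Q̃_{l−1}) V_{n−l}² − e^{−2a t_n} Q̃_{n−1} V₀². -/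
open Real MeasureTheory intervalIntegral Finset

/-! Up to the factor `1 / Γ(1 - γ)`, `Q̃_j` is the slope over `[t_{n-1-j}, t_{n-j}]` of the
increasing convex function `x ↦ -(t_n - x)^{1-γ} / (1 - γ)` on `(-∞, t_n]`, so the coefficients
are nonnegative and nonincreasing in `j`. Then every cross term `V_n V_{n-l}` of `V_n · L̃ V_n`
carries the nonpositive coefficient `Q̃_l - Q̃_{l-1}` and is absorbed by Young's inequality, as
is the initial-value term; the differences `Q̃_l - Q̃_{l-1}` telescope to `Q̃_{n-1} - Q̃_0`. -/

lemma Finset.sum_Ico_one_sub_pred {M : Type*} [AddCommGroup M] (f : ℕ → M) {n : ℕ} (hn : 1 ≤ n) :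
    ∑ l ∈ Ico 1 n, (f l - f (l - 1)) = f (n - 1) - f 0 := by
  obtain ⟨m, rfl⟩ := Nat.exists_eq_add_of_le' hn
  simp only [sum_Ico_eq_sum_range, Nat.add_sub_cancel, add_comm 1]
  exact sum_range_sub f m

noncomputable def kernelAntideriv (γ T x : ℝ) : ℝ := -(T - x) ^ (1 - γ) / (1 - γ)

lemma integral_sub_rpow_neg {γ : ℝ} (hγ : γ < 1) (T x y : ℝ) :
    ∫ s in x..y, (T - s) ^ (-γ) = kernelAntideriv γ T y - kernelAntideriv γ T x := by
  rw [intervalIntegral.integral_comp_sub_left (fun u => u ^ (-γ)) T,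
    integral_rpow (Or.inl (by linarith)), neg_add_eq_sub, kernelAntideriv, kernelAntideriv]
  ring

lemma Qtil_eq_slope {γ : ℝ} (hγ : γ < 1) (n : ℕ) (t : ℕ → ℝ) (j : ℕ) :
    Qtil γ n t j =
      slope (kernelAntideriv γ (t n)) (t (n - 1 - j)) (t (n - j)) / Gamma (1 - γ) := by
  rw [Qtil, integral_sub_rpow_neg hγ, slope_def_field, div_div, mul_comm _ (Gamma _),
    one_div_mul_eq_div]

lemma concaveOn_sub_rpow {p : ℝ} (hp₀ : 0 ≤ p) (hp₁ : p ≤ 1) (T : ℝ) :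
    ConcaveOn ℝ (Set.Iic T) fun x => (T - x) ^ p := by
  have h := (Real.concaveOn_rpow hp₀ hp₁).comp_affineMap
    (AffineMap.const ℝ ℝ T - AffineMap.id ℝ ℝ)
  have hs : (AffineMap.const ℝ ℝ T - AffineMap.id ℝ ℝ) ⁻¹' Set.Ici 0 = Set.Iic T := by
    ext x; simp
  rwa [hs] at h

lemma convexOn_kernelAntideriv {γ : ℝ} (hγ₀ : 0 ≤ γ) (hγ₁ : γ < 1) (T : ℝ) :
    ConvexOn ℝ (Set.Iic T) (kernelAntideriv γ T) :=
  ((concaveOn_sub_rpow (p := 1 - γ) (by linarith) (by linarith) T).neg.smul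
    (inv_nonneg.2 (sub_nonneg.2 hγ₁.le))).congr fun x _ => by
      simp [kernelAntideriv, div_eq_inv_mul]

lemma monotoneOn_kernelAntideriv {γ : ℝ} (hγ₁ : γ < 1) (T : ℝ) :
    MonotoneOn (kernelAntideriv γ T) (Set.Iic T) := fun x _ y hy hxy => by
  have : (T - y) ^ (1 - γ) ≤ (T - x) ^ (1 - γ) :=
    Real.rpow_le_rpow (sub_nonneg.2 hy) (by linarith) (by linarith)
  unfold kernelAntideriv
  gcongr

lemma Qtil_nonneg {γ : ℝ} (hγ₁ : γ < 1) {n : ℕ} {t : ℕ → ℝ} (ht : MonotoneOn t (Set.Iic n))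
    (j : ℕ) : 0 ≤ Qtil γ n t j := by
  have mem : ∀ i ≤ n, t i ∈ Set.Iic (t n) := fun i hi => ht hi (le_refl n) hi
  rw [Qtil_eq_slope hγ₁]
  exact div_nonneg ((monotoneOn_kernelAntideriv hγ₁ _).slope_nonneg (mem _ (by omega))
    (mem _ (by omega))) (Real.Gamma_pos_of_pos (by linarith)).le

lemma Qtil_le_Qtil_pred {γ : ℝ} (hγ₀ : 0 ≤ γ) (hγ₁ : γ < 1) {n : ℕ} {t : ℕ → ℝ}
    (ht : StrictMonoOn t (Set.Iic n)) {l : ℕ} (hl₁ : 1 ≤ l) (hl : l < n) :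
    Qtil γ n t l ≤ Qtil γ n t (l - 1) := by
  have mem : ∀ i ≤ n, t i ∈ Set.Iic (t n) := fun i hi => ht.monotoneOn hi (le_refl n) hi
  have lt : ∀ i j, i < j → j ≤ n → t i < t j := fun i j hij hj =>
    ht (Set.mem_Iic.2 (by omega)) hj hij
  rw [Qtil_eq_slope hγ₁, Qtil_eq_slope hγ₁, show n - 1 - (l - 1) = n - l by omega,
    show n - (l - 1) = n - l + 1 by omega, slope_def_field, slope_def_field]
  exact div_le_div_of_nonneg_right
    ((convexOn_kernelAntideriv hγ₀ hγ₁ _).slope_mono_adjacent (mem _ (by omega))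
      (mem _ (by omega)) (lt _ _ (by omega) (by omega)) (lt _ _ (by omega) (by omega)))
    (Real.Gamma_pos_of_pos (by linarith)).le

theorem coercivity_of_antitone_coeffs {n : ℕ} (hn : 1 ≤ n) {Q w : ℕ → ℝ}
    (hQ : ∀ l ∈ Ico 1 n, Q l ≤ Q (l - 1)) (hQ₀ : 0 ≤ Q (n - 1)) (hw : w 0 = 1)
    (w₀ : ℝ) (V : ℕ → ℝ) :
    (Q 0 / 2 + Q (n - 1) / 4) * V n ^ 2
        + 1 / 2 * ∑ l ∈ Ico 1 n, w l ^ 2 * (Q l - Q (l - 1)) * V (n - l) ^ 2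
        - w₀ ^ 2 * Q (n - 1) * V 0 ^ 2
      ≤ V n * ((∑ l ∈ range n, w l * (Q l - if l = 0 then 0 else Q (l - 1)) * V (n - l))
        - w₀ * Q (n - 1) * V 0) := by
  have split : ∑ l ∈ range n, w l * (Q l - if l = 0 then 0 else Q (l - 1)) * V (n - l)
      = Q 0 * V n + ∑ l ∈ Ico 1 n, w l * (Q l - Q (l - 1)) * V (n - l) := by
    rw [range_eq_Ico, sum_eq_sum_Ico_succ_bot (by omega)]
    congr 1
    · simp [hw]
    · refine sum_congr rfl fun l hl => ?_
      rw [if_neg (by simp only [mem_Ico] at hl; omega)]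
  have young_sum : ∀ l ∈ Ico 1 n,
      (Q l - Q (l - 1)) / 2 * V n ^ 2 + 1 / 2 * (w l ^ 2 * (Q l - Q (l - 1)) * V (n - l) ^ 2)
        ≤ V n * (w l * (Q l - Q (l - 1)) * V (n - l)) := fun l hl => by
    nlinarith [mul_nonneg (sub_nonneg.2 (hQ l hl)) (sq_nonneg (V n - w l * V (n - l)))]
  have young_init : V n * (w₀ * Q (n - 1) * V 0)
      ≤ Q (n - 1) / 4 * V n ^ 2 + w₀ ^ 2 * Q (n - 1) * V 0 ^ 2 := by
    nlinarith [mul_nonneg hQ₀ (sq_nonneg (V n / 2 - w₀ * V 0))]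
  have hsum := sum_le_sum young_sum
  rw [sum_add_distrib, ← sum_mul, ← sum_div, sum_Ico_one_sub_pred Q hn, ← mul_sum,
    ← mul_sum] at hsum
  rw [split, mul_sub, mul_add]
  linarith

theorem pi_nonuniform_coercivity_general
    (γ a : ℝ) (hγ0 : 0 < γ) (hγ1 : γ < 1)
    (n : ℕ) (hn : 1 ≤ n)
    (t : ℕ → ℝ) (hmono : ∀ j < n, t j < t (j + 1))
    (V : ℕ → ℝ) :
    V n * ((∑ l ∈ Finset.range n,
          Real.exp (a * (t (n - l) - t n)) *
            (Qtil γ n t l - if l = 0 then 0 else Qtil γ n t (l - 1)) * V (n - l))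
        - Real.exp (-(a * t n)) * Qtil γ n t (n - 1) * V 0)
    ≥ (Qtil γ n t 0 / 2 + Qtil γ n t (n - 1) / 4) * (V n) ^ 2
      + (1 / 2) * (∑ l ∈ Finset.Ico 1 n,
          Real.exp (2 * a * (t (n - l) - t n)) *
            (Qtil γ n t l - Qtil γ n t (l - 1)) * (V (n - l)) ^ 2)
      - Real.exp (-(2 * a * t n)) * Qtil γ n t (n - 1) * (V 0) ^ 2 := by
  have ht : StrictMonoOn t (Set.Iic n) := strictMonoOn_Iic_of_lt_succ hmono
  have exp_two_mul : ∀ x, Real.exp (2 * x) = Real.exp x ^ 2 := fun x => by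
    rw [sq, ← Real.exp_add, two_mul]
  simp only [mul_assoc (2 : ℝ), ← mul_neg, exp_two_mul]
  exact coercivity_of_antitone_coeffs hn
    (fun l hl => Qtil_le_Qtil_pred hγ0.le hγ1 ht (mem_Ico.1 hl).1 (mem_Ico.1 hl).2)
    (Qtil_nonneg hγ1 ht.monotoneOn _) (by simp) _ V

/-- discrete coercivity of the non-uniform PI discretization of the
Caputo fractional substantial derivative, with tempering weights `e^{a(t_{n−l}−t_n)}`,
`a ≥ 0`, and the convention `Q̃_{−1} = 0` (encoded by the `if l = 0` clause). -/
theorem pi_nonuniform_coercivity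
    (γ a : ℝ) (hγ0 : 0 < γ) (hγ1 : γ < 1) (ha : 0 ≤ a)
    (n : ℕ) (hn : 1 ≤ n)
    (t : ℕ → ℝ) (ht0 : t 0 = 0) (hmono : ∀ j < n, t j < t (j + 1))
    (V : ℕ → ℝ) :
    V n * ((∑ l ∈ Finset.range n,
          Real.exp (a * (t (n - l) - t n)) *
            (Qtil γ n t l - if l = 0 then 0 else Qtil γ n t (l - 1)) * V (n - l))
        - Real.exp (-(a * t n)) * Qtil γ n t (n - 1) * V 0)
    ≥ (Qtil γ n t 0 / 2 + Qtil γ n t (n - 1) / 4) * (V n) ^ 2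
      + (1 / 2) * (∑ l ∈ Finset.Ico 1 n,
          Real.exp (2 * a * (t (n - l) - t n)) *
            (Qtil γ n t l - Qtil γ n t (l - 1)) * (V (n - l)) ^ 2)
      - Real.exp (-(2 * a * t n)) * Qtil γ n t (n - 1) * (V 0) ^ 2 :=
  pi_nonuniform_coercivity_general γ a hγ0 hγ1 n hn t hmono V
end

section
/- Let 1<α<2, let d≥2 and J be positive integers with 2^J ≥ d, and let φ:ℝ→ℝ be continuously differentiable with support contained in [0,d]. For an integer k with 0 ≤ k ≤ 2^J − d set φ_{J,k}(x) = 2^{J/2} φ(2^J x − k), and define the stiffness entry A(k₁,k₂) = ∫₀¹ ( ₀D_x^{α−1} φ_{J,k₁} )(x) · φ_{J,k₂}'(x) dx. Then A is translation invariant, i.e., depends only on k₂ − k₁: for all integers k₁,k₂,m with 0 ≤ k₁, k₂, k₁+m, k₂+m ≤ 2^J − d, one has A(k₁+m, k₂+m) = A(k₁, k₂); in particular the stiffness matrix of the uniform scaling basis is Toeplitz. -/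
/-! Raising both indices by `m` translates every `φ_{J,k}` by `h = m / 2^J`. Since `φ_{J,k₁}`
vanishes on `(-∞, 0)`, the Riemann–Liouville integral from `0` commutes with this translation,
and hence so does `₀D_x^{α−1}`. The translated integrand is the old one composed with
`x ↦ x - h`; the old one vanishes left of `0` (where `₀D_x^{α−1} φ_{J,k₁}` is zero) and right of
`1 - h` (where `φ_{J,k₂}` is locally zero), so integrating over `[-h, 1 - h]` or over `[0, 1]`
gives the same value. -/

open Real MeasureTheory intervalIntegral

/-- Dyadic dilate/translate `φ_{J,k}(x) = 2^{J/2} φ(2^J x − k)` of a scaling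
function `φ`. -/
noncomputable def phiJk (J : ℕ) (φ : ℝ → ℝ) (k : ℕ) (x : ℝ) : ℝ :=
  (2 : ℝ) ^ ((J : ℝ) / 2) * φ ((2 : ℝ) ^ J * x - (k : ℝ))

/-- Stiffness entry
`A(k₁,k₂) = ∫₀¹ ( ₀D_x^{α−1} φ_{J,k₁} )(x) · φ_{J,k₂}'(x) dx`, where
`( ₀D_x^{α−1} f )(x) = (1/Γ(2−α))·(d/dx) ∫₀ˣ (x−s)^{1−α} f(s) ds`. -/
noncomputable def stiffEntry (α : ℝ) (J : ℕ) (φ : ℝ → ℝ) (k₁ k₂ : ℕ) : ℝ :=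
  ∫ x in (0:ℝ)..1,
    (deriv (fun y => (1 / Real.Gamma (2 - α)) *
        ∫ s in (0:ℝ)..y, (y - s) ^ (1 - α) * phiJk J φ k₁ s) x)
      * deriv (phiJk J φ k₂) x

section IntervalIntegral

variable {E : Type*} [NormedAddCommGroup E] [NormedSpace ℝ E]

theorem intervalIntegral_eq_of_forall_gt_eq_zero {g : ℝ → E} {c b : ℝ}
    (hg : ∀ x, c < x → g x = 0) (hcb : c ≤ b) (a : ℝ) :
    ∫ x in a..b, g x = ∫ x in a..c, g x := by
  have hind : (Set.Iic c).indicator g = g :=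
    Set.indicator_eq_self.2 fun x hx => not_lt.1 (mt (hg x) hx)
  rw [← hind]
  simp only [intervalIntegral, setIntegral_indicator measurableSet_Iic, Set.Ioc_inter_Iic,
    min_eq_right hcb, min_self, Set.Ioc_eq_empty_of_le (min_le_right a c),
    Set.Ioc_eq_empty_of_le ((min_le_right a c).trans hcb)]

theorem intervalIntegral_eq_of_forall_lt_eq_zero {g : ℝ → E} {c a : ℝ}
    (hg : ∀ x < c, g x = 0) (hac : a ≤ c) (b : ℝ) :
    ∫ x in a..b, g x = ∫ x in c..b, g x := by
  have hreflect (u : ℝ) : ∫ x in u..b, g x = ∫ x in -b..-u, g (-x) := by simp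
  rw [hreflect, hreflect]
  exact intervalIntegral_eq_of_forall_gt_eq_zero
    (fun x hx => hg (-x) (neg_lt.1 hx)) (neg_le_neg hac) _

end IntervalIntegral

theorem intervalIntegral_kernel_mul_comp_sub {K f : ℝ → ℝ} (hf : ∀ s < 0, f s = 0)
    {h : ℝ} (hh : 0 ≤ h) (y : ℝ) :
    ∫ s in (0:ℝ)..y, K (y - s) * f (s - h) = ∫ s in (0:ℝ)..y - h, K (y - h - s) * f s := by
  calc ∫ s in (0:ℝ)..y, K (y - s) * f (s - h)
      = ∫ s in (0:ℝ)..y, (fun t => K (y - h - t) * f t) (s - h) := by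
        simp only [sub_sub_sub_cancel_right]
    _ = ∫ s in -h..y - h, K (y - h - s) * f s := by
        rw [intervalIntegral.integral_comp_sub_right (fun t => K (y - h - t) * f t), zero_sub]
    _ = ∫ s in (0:ℝ)..y - h, K (y - h - s) * f s :=
        intervalIntegral_eq_of_forall_lt_eq_zero (fun s hs => by simp [hf s hs])
          (neg_nonpos.2 hh) _

/-- The Riemann–Liouville integral `₀I_x^{2−α} f`, indexed by `α` so that
`₀D_x^{α−1} f = (₀I_x^{2−α} f)'`. -/
noncomputable def rlIntegral (α : ℝ) (f : ℝ → ℝ) (y : ℝ) : ℝ :=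
  1 / Real.Gamma (2 - α) * ∫ s in (0:ℝ)..y, (y - s) ^ (1 - α) * f s

noncomputable def rlFracDeriv (α : ℝ) (f : ℝ → ℝ) : ℝ → ℝ :=
  deriv (rlIntegral α f)

theorem rlIntegral_comp_sub {f : ℝ → ℝ} (hf : ∀ s < 0, f s = 0) {h : ℝ} (hh : 0 ≤ h)
    (α y : ℝ) : rlIntegral α (fun s => f (s - h)) y = rlIntegral α f (y - h) := by
  rw [rlIntegral, rlIntegral,
    intervalIntegral_kernel_mul_comp_sub (K := fun t => t ^ (1 - α)) hf hh]

theorem rlFracDeriv_comp_sub {f : ℝ → ℝ} (hf : ∀ s < 0, f s = 0) {h : ℝ} (hh : 0 ≤ h)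
    (α x : ℝ) : rlFracDeriv α (fun s => f (s - h)) x = rlFracDeriv α f (x - h) := by
  rw [rlFracDeriv, rlFracDeriv, funext (rlIntegral_comp_sub hf hh α)]
  exact deriv_comp_sub_const ..

theorem rlIntegral_eq_zero_of_neg {f : ℝ → ℝ} (hf : ∀ s < 0, f s = 0) (α : ℝ) {y : ℝ}
    (hy : y < 0) : rlIntegral α f y = 0 := by
  rw [rlIntegral, intervalIntegral.integral_symm, intervalIntegral_eq_of_forall_lt_eq_zero
    (fun s hs => by simp [hf s hs]) hy.le, intervalIntegral.integral_same, neg_zero, mul_zero]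

theorem rlFracDeriv_eq_zero_of_neg {f : ℝ → ℝ} (hf : ∀ s < 0, f s = 0) (α : ℝ) {x : ℝ}
    (hx : x < 0) : rlFracDeriv α f x = 0 := by
  have hloc : rlIntegral α f =ᶠ[nhds x] fun _ => 0 := by
    filter_upwards [Iio_mem_nhds hx] with y hy using rlIntegral_eq_zero_of_neg hf α hy
  rw [rlFracDeriv, hloc.deriv_eq, deriv_const]

theorem deriv_eq_zero_of_forall_gt_eq_zero {g : ℝ → ℝ} {b : ℝ} (hg : ∀ x, b < x → g x = 0)
    {x : ℝ} (hx : b < x) : deriv g x = 0 := by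
  have hloc : g =ᶠ[nhds x] fun _ => 0 := by
    filter_upwards [Ioi_mem_nhds hx] with y hy using hg y hy
  rw [hloc.deriv_eq, deriv_const]

theorem integral_rlFracDeriv_mul_deriv_comp_sub {f g : ℝ → ℝ} {h L : ℝ}
    (hf : ∀ x < 0, f x = 0) (hg : ∀ x, L - h < x → g x = 0) (hh : 0 ≤ h) (α : ℝ) :
    ∫ x in (0:ℝ)..L, rlFracDeriv α (fun s => f (s - h)) x * deriv (fun s => g (s - h)) x
      = ∫ x in (0:ℝ)..L, rlFracDeriv α f x * deriv g x := by
  simp only [rlFracDeriv_comp_sub hf hh, deriv_comp_sub_const]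
  rw [intervalIntegral.integral_comp_sub_right (fun x => rlFracDeriv α f x * deriv g x),
    zero_sub, intervalIntegral_eq_of_forall_lt_eq_zero
      (fun x hx => by rw [rlFracDeriv_eq_zero_of_neg hf α hx, zero_mul]) (neg_nonpos.2 hh),
    intervalIntegral_eq_of_forall_gt_eq_zero
      (fun x hx => by rw [deriv_eq_zero_of_forall_gt_eq_zero hg hx, mul_zero])
      (sub_le_self L hh)]

theorem phiJk_add (J : ℕ) (φ : ℝ → ℝ) (k m : ℕ) (x : ℝ) :
    phiJk J φ (k + m) x = phiJk J φ k (x - m / 2 ^ J) := by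
  simp only [phiJk]
  congr 2
  field_simp
  push_cast
  ring

theorem phiJk_eq_zero_of_neg {φ : ℝ → ℝ} (hsupp : Function.support φ ⊆ Set.Ici 0)
    (J k : ℕ) (x : ℝ) (hx : x < 0) : phiJk J φ k x = 0 := by
  have hφ : φ (2 ^ J * x - k) = 0 := Function.notMem_support.1 fun hmem => by
    have hnonneg := Set.mem_Ici.1 (hsupp hmem)
    nlinarith [pow_pos (two_pos : (0:ℝ) < 2) J, (Nat.cast_nonneg k : (0:ℝ) ≤ k)]
  rw [phiJk, hφ, mul_zero]

theorem phiJk_eq_zero_of_gt {φ : ℝ → ℝ} {d : ℝ} (hsupp : Function.support φ ⊆ Set.Iic d)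
    (J k : ℕ) {x : ℝ} (hx : k + d < 2 ^ J * x) : phiJk J φ k x = 0 := by
  have hφ : φ (2 ^ J * x - k) = 0 :=
    Function.notMem_support.1 fun hmem => by linarith [Set.mem_Iic.1 (hsupp hmem)]
  rw [phiJk, hφ, mul_zero]

theorem stiffEntry_eq_integral_rlFracDeriv (α : ℝ) (J : ℕ) (φ : ℝ → ℝ) (k₁ k₂ : ℕ) :
    stiffEntry α J φ k₁ k₂
      = ∫ x in (0:ℝ)..1, rlFracDeriv α (phiJk J φ k₁) x * deriv (phiJk J φ k₂) x :=
  rfl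

theorem stiffness_matrix_toeplitz_general
    (α : ℝ)
    (d J : ℕ) (hJ : d ≤ 2 ^ J)
    (φ : ℝ → ℝ)
    (hsupp : Function.support φ ⊆ Set.Icc (0 : ℝ) (d : ℝ))
    (k₁ k₂ m : ℕ)
    (hk₂m : k₂ + m ≤ 2 ^ J - d) :
    stiffEntry α J φ (k₁ + m) (k₂ + m) = stiffEntry α J φ k₁ k₂ := by
  have h2J : (0:ℝ) < 2 ^ J := by positivity
  have hshift (k : ℕ) : phiJk J φ (k + m) = fun x => phiJk J φ k (x - m / 2 ^ J) :=
    funext (phiJk_add J φ k m)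
  have hfit : (k₂ + d : ℝ) ≤ 2 ^ J * (1 - m / 2 ^ J) := by
    rw [mul_sub, mul_one, mul_div_cancel₀ _ h2J.ne', le_sub_iff_add_le]
    exact_mod_cast (by omega : k₂ + d + m ≤ 2 ^ J)
  have hright (x : ℝ) (hx : 1 - m / 2 ^ J < x) : phiJk J φ k₂ x = 0 :=
    phiJk_eq_zero_of_gt (hsupp.trans Set.Icc_subset_Iic_self) J k₂
      (hfit.trans_lt ((mul_lt_mul_iff_right₀ h2J).2 hx))
  rw [stiffEntry_eq_integral_rlFracDeriv, stiffEntry_eq_integral_rlFracDeriv, hshift, hshift]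
  exact integral_rlFracDeriv_mul_deriv_comp_sub
    (phiJk_eq_zero_of_neg (hsupp.trans Set.Icc_subset_Ici_self) J k₁) hright (by positivity) α

/-- the stiffness matrix of the uniform scaling basis is Toeplitz:
for a compactly supported `C¹` scaling function `φ` with support in `[0,d]`,
the entries `A(k₁,k₂)` depend only on `k₂ − k₁`. -/
theorem stiffness_matrix_toeplitz
    (α : ℝ) (hα1 : 1 < α) (hα2 : α < 2)
    (d J : ℕ) (hd : 2 ≤ d) (hJ : d ≤ 2 ^ J)
    (φ : ℝ → ℝ) (hφ : ContDiff ℝ 1 φ)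
    (hsupp : Function.support φ ⊆ Set.Icc (0 : ℝ) (d : ℝ))
    (k₁ k₂ m : ℕ)
    (hk₁ : k₁ ≤ 2 ^ J - d) (hk₂ : k₂ ≤ 2 ^ J - d)
    (hk₁m : k₁ + m ≤ 2 ^ J - d) (hk₂m : k₂ + m ≤ 2 ^ J - d) :
    stiffEntry α J φ (k₁ + m) (k₂ + m) = stiffEntry α J φ k₁ k₂ :=
  stiffness_matrix_toeplitz_general α d J hJ φ hsupp k₁ k₂ m hk₂m
end

section
/- Let H be a real inner product space, let a≥0 be real, and let u, v, w ∈ H. Then ⟨(3/2)u − 2e^{−a}v + (1/2)e^{−2a}w, u⟩ ≥ (1/4)‖u‖² − (1/4)‖v‖² + (e^{−2a}/4)‖2e^{a}u − v‖² − (e^{−2a}/4)‖2e^{a}v − w‖². -/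
/-!
With `c = e^{-a}`, the weight `e^{-2a}` turns `‖2e^{a}x − y‖` into `‖2x − c y‖`, and the
G-stability identity of BDF2 applied to `u, c v, c² w` gives
`4⟨(3/2)u − 2c v + (c²/2)w, u⟩ = ‖u‖² + ‖2u − c v‖² − c²(‖v‖² + ‖2v − c w‖²) + ‖u − 2c v + c² w‖²`.
Dropping the last square and using `c² ≤ 1` (this is where `a ≥ 0` enters) gives the inequality.
-/

open Real

section BDF2

variable {H : Type*} [NormedAddCommGroup H] [InnerProductSpace ℝ H]

theorem four_mul_inner_weighted_bdf2 (c : ℝ) (u v w : H) :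
    4 * inner ℝ ((3 / 2 : ℝ) • u - (2 * c) • v + (c ^ 2 / 2) • w) u
      = ‖u‖ ^ 2 + ‖(2 : ℝ) • u - c • v‖ ^ 2 - c ^ 2 * (‖v‖ ^ 2 + ‖(2 : ℝ) • v - c • w‖ ^ 2)
        + ‖u - (2 * c) • v + c ^ 2 • w‖ ^ 2 := by
  simp only [← real_inner_self_eq_norm_sq, inner_add_left, inner_sub_left, inner_add_right,
    inner_sub_right, real_inner_smul_left, real_inner_smul_right, real_inner_comm u v,
    real_inner_comm u w, real_inner_comm v w]
  ring

theorem exp_neg_two_mul_mul_norm_sq (a : ℝ) (x y : H) :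
    exp (-(2 * a)) * ‖(2 * exp a) • x - y‖ ^ 2 = ‖(2 : ℝ) • x - exp (-a) • y‖ ^ 2 := by
  have hrescale : (2 : ℝ) • x - exp (-a) • y = exp (-a) • ((2 * exp a) • x - y) := by
    rw [smul_sub, smul_smul, mul_left_comm, ← exp_add, neg_add_cancel, exp_zero, mul_one]
  rw [hrescale, norm_smul, mul_pow, norm_of_nonneg (exp_pos _).le, ← exp_nat_mul]
  ring_nf

end BDF2

/-- energy inequality for the exponentially weighted BDF2 operator:
for a real inner product space `H`, `a ≥ 0` and `u, v, w ∈ H`,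
`⟨(3/2)u − 2e^{−a}v + (1/2)e^{−2a}w, u⟩ ≥ (1/4)‖u‖² − (1/4)‖v‖²
  + (e^{−2a}/4)‖2e^{a}u − v‖² − (e^{−2a}/4)‖2e^{a}v − w‖²`. -/
theorem bdf2_energy_inequality
    {H : Type*} [NormedAddCommGroup H] [InnerProductSpace ℝ H]
    (a : ℝ) (ha : 0 ≤ a) (u v w : H) :
    (inner ℝ ((3 / 2 : ℝ) • u - (2 * Real.exp (-a)) • v + (Real.exp (-(2 * a)) / 2) • w) u : ℝ)
      ≥ (1 / 4) * ‖u‖ ^ 2 - (1 / 4) * ‖v‖ ^ 2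
        + (Real.exp (-(2 * a)) / 4) * ‖(2 * Real.exp a) • u - v‖ ^ 2
        - (Real.exp (-(2 * a)) / 4) * ‖(2 * Real.exp a) • v - w‖ ^ 2 := by
  have hdamping : exp (-(2 * a)) ≤ 1 := exp_le_one_iff.mpr (by linarith)
  have hexp_sq : exp (-a) ^ 2 = exp (-(2 * a)) := by rw [← exp_nat_mul]; ring_nf
  have hidentity := four_mul_inner_weighted_bdf2 (exp (-a)) u v w
  rw [hexp_sq] at hidentity
  have hu := exp_neg_two_mul_mul_norm_sq a u v
  have hv := exp_neg_two_mul_mul_norm_sq a v w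
  linarith [sq_nonneg ‖u - (2 * exp (-a)) • v + exp (-(2 * a)) • w‖,
    mul_le_mul_of_nonneg_right hdamping
      (add_nonneg (sq_nonneg ‖v‖) (sq_nonneg ‖(2 : ℝ) • v - exp (-a) • w‖))]
end
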